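/- arXiv:1412.1257 — 7 statements merged into one kernel-verified Lean document; each statement's English description precedes it below -/
import Mathlib

section
/- Let a, γ be negative real numbers and set A = √(−a), G = √(−γ) (positive reals). Define the 2×2 complex matrices Γ₁ = [[1,0],[0,1]], Γ₂ = [[iA,0],[0,−iA]], Γ₃ = [[0,iGA],[iGA,0]], Γ₄ = [[0,−G],[G,0]]. Then for all indices 1 ≤ u < v ≤ 4 and all real scalars β, β′, the matrices βΓ_u and β′Γ_v are mutually orthogonal: (βΓ_u)(β′Γ_v)† + (β′Γ_v)(βΓ_u)† = 0. -/
/-!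
`Γ₁ = 1`, while `Γ₂, Γ₃, Γ₄` are skew-Hermitian (up to real factors they are the quaternion units
in their `2 × 2` complex representation). For skew-Hermitian `B, C` one has
`B Cᴴ + C Bᴴ = -(B C + C B)`, so orthogonality to `Γ₁` is skew-Hermiticity and orthogonality among
`Γ₂, Γ₃, Γ₄` is anticommutation. Real scalars commute with `ᴴ`, so both survive scaling.
-/

open Matrix Complex

namespace Matrix

variable {m n α : Type*} [Fintype n] [Ring α] [StarRing α]

def MutuallyOrthogonal (B₁ B₂ : Matrix m n α) : Prop :=
  B₁ * B₂ᴴ + B₂ * B₁ᴴ = 0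

theorem MutuallyOrthogonal.smul {R : Type*} [CommSemiring R] [StarRing R] [TrivialStar R]
    [Module R α] [StarModule R α] [SMulCommClass R α α] [IsScalarTower R α α]
    {B₁ B₂ : Matrix m n α} (h : MutuallyOrthogonal B₁ B₂) (r s : R) :
    MutuallyOrthogonal (r • B₁) (s • B₂) := by
  rw [MutuallyOrthogonal] at h ⊢
  simp only [conjTranspose_smul, star_trivial, Matrix.smul_mul, Matrix.mul_smul, smul_smul,
    mul_comm s r, ← smul_add, h, smul_zero]

theorem mutuallyOrthogonal_iff_anticommute {B C : Matrix n n α} (hB : Bᴴ = -B) (hC : Cᴴ = -C) :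
    MutuallyOrthogonal B C ↔ B * C + C * B = 0 := by
  rw [MutuallyOrthogonal, hB, hC, mul_neg, mul_neg, ← neg_add, neg_eq_zero]

variable [DecidableEq n]

theorem mutuallyOrthogonal_one_left_iff {B : Matrix n n α} :
    MutuallyOrthogonal 1 B ↔ Bᴴ = -B := by
  rw [MutuallyOrthogonal, one_mul, conjTranspose_one, mul_one, add_eq_zero_iff_eq_neg]

end Matrix

/-- `weightMatrix A G k` is the paper's `Γ_{k+1}`. -/
def weightMatrix (A G : ℝ) : Fin 4 → Matrix (Fin 2) (Fin 2) ℂ :=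
  ![1, !![I * A, 0; 0, -(I * A)], !![0, I * G * A; I * G * A, 0], !![0, -(G : ℂ); (G : ℂ), 0]]

section WeightMatrix

variable (A G : ℝ)

theorem weightMatrix_conjTranspose {k : Fin 4} (hk : k ≠ 0) :
    (weightMatrix A G k)ᴴ = -weightMatrix A G k := by
  fin_cases k
  · exact (hk rfl).elim
  all_goals
    ext i j
    fin_cases i <;> fin_cases j <;> simp [weightMatrix]

theorem weightMatrix_anticommute {j k : Fin 4} (hj : j ≠ 0) (hjk : j < k) :
    weightMatrix A G j * weightMatrix A G k + weightMatrix A G k * weightMatrix A G j = 0 := by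
  fin_cases j <;> fin_cases k <;> simp at hj hjk <;>
    ext i l <;> fin_cases i <;> fin_cases l <;> simp [weightMatrix] <;> ring

theorem weightMatrix_mutuallyOrthogonal {j k : Fin 4} (hjk : j < k) :
    MutuallyOrthogonal (weightMatrix A G j) (weightMatrix A G k) := by
  have hk : k ≠ 0 := (Fin.zero_le j).trans_lt hjk |>.ne'
  by_cases hj : j = 0
  · subst hj
    exact mutuallyOrthogonal_one_left_iff.mpr (weightMatrix_conjTranspose A G hk)
  · exact (mutuallyOrthogonal_iff_anticommute (weightMatrix_conjTranspose A G hj)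
      (weightMatrix_conjTranspose A G hk)).mpr (weightMatrix_anticommute A G hj hjk)

end WeightMatrix

theorem mutually_orthogonal_weight_matrices_general
    (A G : ℝ)
    (Γ : Fin 4 → Matrix (Fin 2) (Fin 2) ℂ)
    (h1 : Γ 0 = !![1, 0; 0, 1])
    (h2 : Γ 1 = !![Complex.I * A, 0; 0, -(Complex.I * A)])
    (h3 : Γ 2 = !![0, Complex.I * G * A; Complex.I * G * A, 0])
    (h4 : Γ 3 = !![0, -(G : ℂ); (G : ℂ), 0]) :
    ∀ u v : Fin 4, u < v → ∀ β β' : ℝ,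
      (β • Γ u) * (β' • Γ v)ᴴ + (β' • Γ v) * (β • Γ u)ᴴ = 0 := by
  have hΓ : Γ = weightMatrix A G := by
    funext k
    fin_cases k <;> simp [weightMatrix, h1, h2, h3, h4, one_fin_two]
  subst hΓ
  intro u v huv β β'
  exact (weightMatrix_mutuallyOrthogonal A G huv).smul β β'

/-- The four basis weight matrices `Γ₁, Γ₂, Γ₃, Γ₄` of the SIMO relay code of
Theorem 1 are pairwise mutually orthogonal, and this is preserved by real
scalings (`Γ_{i,j} = Γ_{i,1} β_j` with `β_j` totally real):
`(βΓ_u)(β′Γ_v)† + (β′Γ_v)(βΓ_u)† = 0` for `u < v`. -/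
theorem mutually_orthogonal_weight_matrices
    (a γ : ℝ) (ha : a < 0) (hγ : γ < 0)
    (A G : ℝ) (hA : A = Real.sqrt (-a)) (hG : G = Real.sqrt (-γ))
    (Γ : Fin 4 → Matrix (Fin 2) (Fin 2) ℂ)
    (h1 : Γ 0 = !![1, 0; 0, 1])
    (h2 : Γ 1 = !![Complex.I * A, 0; 0, -(Complex.I * A)])
    (h3 : Γ 2 = !![0, Complex.I * G * A; Complex.I * G * A, 0])
    (h4 : Γ 3 = !![0, -(G : ℂ); (G : ℂ), 0]) :
    ∀ u v : Fin 4, u < v → ∀ β β' : ℝ,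
      (β • Γ u) * (β' • Γ v)ᴴ + (β' • Γ v) * (β • Γ u)ᴴ = 0 :=
  mutually_orthogonal_weight_matrices_general A G Γ h1 h2 h3 h4
end

section
/- Let K be a field admitting a ring homomorphism σ : K → ℝ, and let a, γ ∈ K satisfy σ(a) < 0 and σ(γ) < 0. Then the quaternion algebra ℍ[K, a, γ] is a division algebra: every nonzero element of ℍ[K, a, γ] is a unit. -/
open Quaternion

/-! The reduced norm `q * star q` of `ℍ[K, a, γ]` is the quadratic form
`x² - a y² - γ z² + a γ w²`, and `q` is invertible as soon as its norm is nonzero,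
with inverse `star q / N(q)`. Under `σ` the form becomes `x² + |a| y² + |γ| z² + |aγ| w²`
over `ℝ`, which is positive definite; as `σ` is injective the norm over `K` vanishes
only at `q = 0`. -/

theorem sq_sub_mul_sq_sub_mul_sq_add_mul_mul_sq_eq_zero_iff {R : Type*} [CommRing R] [LinearOrder R]
    [IsStrictOrderedRing R] {a b x y z w : R} (ha : a < 0) (hb : b < 0) :
    x ^ 2 - a * y ^ 2 - b * z ^ 2 + a * b * w ^ 2 = 0 ↔ x = 0 ∧ y = 0 ∧ z = 0 ∧ w = 0 := by
  refine ⟨fun h => ?_, by rintro ⟨rfl, rfl, rfl, rfl⟩; ring⟩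
  have hab : 0 < a * b := mul_pos_of_neg_of_neg ha hb
  have hx := sq_nonneg x
  have hy : 0 ≤ -a * y ^ 2 := mul_nonneg (neg_nonneg.2 ha.le) (sq_nonneg y)
  have hz : 0 ≤ -b * z ^ 2 := mul_nonneg (neg_nonneg.2 hb.le) (sq_nonneg z)
  have hw : 0 ≤ a * b * w ^ 2 := mul_nonneg hab.le (sq_nonneg w)
  refine ⟨pow_eq_zero_iff two_ne_zero |>.1 (by linarith), ?_, ?_, ?_⟩
  · have : -a * y ^ 2 = 0 := by linarith
    simpa [ha.ne] using this
  · have : -b * z ^ 2 = 0 := by linarith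
    simpa [hb.ne] using this
  · have : a * b * w ^ 2 = 0 := by linarith
    simpa [hab.ne'] using this

namespace QuaternionAlgebra

theorem re_self_mul_star {R : Type*} [CommRing R] {c₁ c₃ : R} (q : ℍ[R, c₁, c₃]) :
    (q * star q).re = q.re ^ 2 - c₁ * q.imI ^ 2 - c₃ * q.imJ ^ 2 + c₁ * c₃ * q.imK ^ 2 := by
  simp only [re_mul, re_star, imI_star, imJ_star, imK_star]
  ring

theorem isUnit_of_re_self_mul_star_ne_zero {K : Type*} [Field K] {c₁ c₂ c₃ : K}
    {q : ℍ[K, c₁, c₂, c₃]} (h : (q * star q).re ≠ 0) : IsUnit q := by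
  set n := (q * star q).re
  have hq_right : q * star q = n := mul_star_eq_coe q
  have hq_left : star q * q = n := by rw [star_comm_self', hq_right]
  refine isUnit_iff_exists.2 ⟨star q * ↑n⁻¹, ?_, ?_⟩
  · rw [← mul_assoc, hq_right, ← coe_mul, mul_inv_cancel₀ h, coe_one]
  · rw [mul_assoc, coe_commutes, ← mul_assoc, hq_left, ← coe_mul, mul_inv_cancel₀ h, coe_one]

end QuaternionAlgebra

/-- Full-diversity claim of Theorem 2: if `K` has a real embedding `σ` with
`σ a < 0` and `σ γ < 0`, then the quaternion algebra `(a, γ)_K` is division. -/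
theorem quaternionAlgebra_division_of_real_embedding_neg
    {K : Type*} [Field K] (σ : K →+* ℝ) (a γ : K)
    (ha : σ a < 0) (hγ : σ γ < 0) :
    ∀ q : ℍ[K, a, γ], q ≠ 0 → IsUnit q := by
  intro q hq
  refine QuaternionAlgebra.isUnit_of_re_self_mul_star_ne_zero fun hn => hq ?_
  have hσn := congrArg σ hn
  simp only [QuaternionAlgebra.re_self_mul_star, map_add, map_sub, map_mul, map_pow,
    map_zero] at hσn
  obtain ⟨h₁, h₂, h₃, h₄⟩ := (sq_sub_mul_sq_sub_mul_sq_add_mul_mul_sq_eq_zero_iff ha hγ).1 hσn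
  simp only [map_eq_zero_iff σ σ.injective] at h₁ h₂ h₃ h₄
  ext <;> assumption
end

section
/- Let F be a number field with ring of integers O_F, and let 𝔭 be a nonzero prime ideal of O_F. Let a ∈ O_F satisfy a ∈ 𝔭 and a ∉ 𝔭² (i.e., the 𝔭-adic valuation of a equals 1), and let γ ∈ O_F be such that the residue of γ in O_F/𝔭 is not a square. Then the quaternion algebra ℍ[F, a, γ] is a division algebra: every nonzero element is a unit. -/
/-!
A quaternion `q` with `(q * star q).re ≠ 0` is invertible, with inverse `star q` scaled by that
norm; so it suffices that the norm form `x² - a y² - γ z² + a γ w²` has no nontrivial zero over `F`,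
or, after clearing denominators and localizing, over the discrete valuation ring `(𝓞 F)_𝔭`.
There, write the norm form as `(x² - γ z²) - a (y² - γ w²)`. Since `γ` is not a square mod `𝔭`,
`x² - γ z² ∈ 𝔭` forces `x, z ∈ 𝔭`; then `x² - γ z² ∈ 𝔭²`, and as `a ∉ 𝔭²` also `y, w ∈ 𝔭`.
Dividing by a uniformizer gives an infinite descent, which Krull's intersection theorem rules out.
-/

open Quaternion NumberField QuadraticMap IsLocalRing

namespace IsLocalRing

variable {R : Type*} [CommRing R] [IsLocalRing R]

theorem mem_maximalIdeal_of_sq_sub_mul_sq_mem {γ : R} (hγ : ¬IsSquare (residue R γ)) {x z : R}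
    (h : x ^ 2 - γ * z ^ 2 ∈ maximalIdeal R) : x ∈ maximalIdeal R ∧ z ∈ maximalIdeal R := by
  simp only [← residue_eq_zero_iff, map_sub, map_mul, map_pow, sub_eq_zero] at h ⊢
  have hz : residue R z = 0 := by
    by_contra hz
    exact hγ ⟨residue R x / residue R z, by field_simp; exact h.symm⟩
  rw [hz] at h
  exact ⟨by simpa using h, hz⟩

theorem mem_maximalIdeal_of_mul_mem_sq {a t : R} (ha : a ∉ maximalIdeal R ^ 2)
    (h : a * t ∈ maximalIdeal R ^ 2) : t ∈ maximalIdeal R := by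
  by_contra ht
  obtain ⟨u, rfl⟩ := notMem_maximalIdeal.mp ht
  exact ha (by simpa using Ideal.mul_mem_right (↑u⁻¹ : R) _ h)

end IsLocalRing

theorem QuadraticMap.anisotropic_of_forall_mem_maximalIdeal {R ι : Type*} [CommRing R]
    [IsDomain R] [IsDiscreteValuationRing R] {Q : QuadraticForm R (ι → R)}
    (h : ∀ v, Q v = 0 → ∀ i, v i ∈ maximalIdeal R) : Q.Anisotropic := by
  obtain ⟨ϖ, hϖ⟩ := IsDiscreteValuationRing.exists_irreducible R
  have descent (n : ℕ) : ∀ v, Q v = 0 → ∀ i, v i ∈ maximalIdeal R ^ n := by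
    induction n with
    | zero => simp
    | succ n ih =>
      intro v hv
      have hdvd (i : ι) : ϖ ∣ v i := by
        simpa [hϖ.maximalIdeal_eq, Ideal.mem_span_singleton] using h v hv i
      choose w hw using hdvd
      have hw0 : Q w = 0 := by
        rw [show v = ϖ • w from funext hw, QuadraticMap.map_smul, smul_eq_mul] at hv
        exact (mul_eq_zero.mp hv).resolve_left (mul_ne_zero hϖ.ne_zero hϖ.ne_zero)
      intro i
      rw [hw i, pow_succ']
      exact Ideal.mul_mem_mul ((mem_maximalIdeal ϖ).mpr hϖ.not_isUnit) (ih w hw0 i)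
  intro v hv
  funext i
  rw [Pi.zero_apply, ← Ideal.mem_bot,
    ← Ideal.iInf_pow_eq_bot_of_isLocalRing _ (maximalIdeal.isMaximal R).ne_top, Ideal.mem_iInf]
  exact fun n ↦ descent n v hv i

namespace QuaternionAlgebra

section NormForm

variable {R : Type*} [CommRing R]

noncomputable def normForm (a b : R) : QuadraticForm R (Fin 4 → R) :=
  weightedSumSquares R ![1, -a, -b, a * b]

theorem normForm_apply (a b : R) (v : Fin 4 → R) :
    normForm a b v = v 0 ^ 2 - a * v 1 ^ 2 - b * v 2 ^ 2 + a * b * v 3 ^ 2 := by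
  simp only [normForm, weightedSumSquares_apply, smul_eq_mul, Fin.sum_univ_four,
    Matrix.cons_val_zero, Matrix.cons_val_one, Matrix.cons_val, one_mul, neg_mul]
  ring

theorem re_mul_star (a b : R) (q : ℍ[R, a, b]) :
    (q * star q).re = normForm a b ![q.re, q.imI, q.imJ, q.imK] := by
  simp only [normForm_apply, re_mul, re_star, imI_star, imJ_star, imK_star, Matrix.cons_val]
  ring

theorem normForm_map {S : Type*} [CommRing S] (f : R →+* S) (a b : R) (v : Fin 4 → R) :
    normForm (f a) (f b) (f ∘ v) = f (normForm a b v) := by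
  simp [normForm_apply]

theorem anisotropic_normForm_of_injective {S : Type*} [CommRing S] {f : R →+* S}
    (hf : Function.Injective f) {a b : R} (h : (normForm (f a) (f b)).Anisotropic) :
    (normForm a b).Anisotropic := fun v hv ↦
  funext fun i ↦ hf <| by
    simpa using congrFun (h (f ∘ v) (by rw [normForm_map, hv, map_zero])) i

theorem anisotropic_normForm_of_isFractionRing [IsDomain R] (K : Type*) [Field K] [Algebra R K]
    [IsFractionRing R K] {a b : R} (h : (normForm a b).Anisotropic) :
    (normForm (algebraMap R K a) (algebraMap R K b)).Anisotropic := by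
  intro v hv
  obtain ⟨d, hd⟩ := IsLocalization.exist_integer_multiples_of_finite (nonZeroDivisors R) v
  choose V hV using hd
  have hd0 : algebraMap R K d ≠ 0 :=
    IsFractionRing.to_map_ne_zero_of_mem_nonZeroDivisors d.prop
  have hVv : algebraMap R K ∘ V = algebraMap R K d • v :=
    funext fun i ↦ (hV i).trans (Algebra.smul_def _ _)
  have hV0 : V = 0 := by
    refine h V (IsFractionRing.injective R K ?_)
    rw [← normForm_map, hVv, QuadraticMap.map_smul, hv, smul_zero, map_zero]
  rw [hV0, map_comp_zero, eq_comm, smul_eq_zero] at hVv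
  exact hVv.resolve_left hd0

theorem isUnit_of_anisotropic_normForm {K : Type*} [Field K] {a b : K}
    (h : (normForm a b).Anisotropic) {q : ℍ[K, a, b]} (hq : q ≠ 0) : IsUnit q := by
  have hn : (q * star q).re ≠ 0 := by
    rw [re_mul_star]
    intro h0
    have hq0 := h _ h0
    exact hq <| QuaternionAlgebra.ext (congrFun hq0 0) (congrFun hq0 1) (congrFun hq0 2)
      (congrFun hq0 3)
  have hright := mul_star_eq_coe q
  have hleft : star q * q = (q * star q).re := (star_comm_self' q).trans hright
  set n := (q * star q).re
  have hinv : n⁻¹ • (n : ℍ[K, a, b]) = 1 := by rw [smul_coe, inv_mul_cancel₀ hn, coe_one]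
  refine ⟨⟨q, n⁻¹ • star q, ?_, ?_⟩, rfl⟩
  · rw [mul_smul_comm, hright, hinv]
  · rw [smul_mul_assoc, hleft, hinv]

end NormForm

section LocalRing

variable {R : Type*} [CommRing R] {a γ : R}

theorem forall_mem_maximalIdeal_of_normForm_eq_zero [IsLocalRing R] (ha : a ∈ maximalIdeal R)
    (ha2 : a ∉ maximalIdeal R ^ 2) (hγ : ¬IsSquare (residue R γ)) {v : Fin 4 → R}
    (hv : normForm a γ v = 0) : ∀ i, v i ∈ maximalIdeal R := by
  rw [normForm_apply] at hv
  have key : v 0 ^ 2 - γ * v 2 ^ 2 = a * (v 1 ^ 2 - γ * v 3 ^ 2) := by linear_combination hv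
  obtain ⟨h0, h2⟩ := mem_maximalIdeal_of_sq_sub_mul_sq_mem hγ (key ▸ Ideal.mul_mem_right _ _ ha)
  have hsq : a * (v 1 ^ 2 - γ * v 3 ^ 2) ∈ maximalIdeal R ^ 2 :=
    key ▸ sub_mem (Ideal.pow_mem_pow h0 2) (Ideal.mul_mem_left _ _ (Ideal.pow_mem_pow h2 2))
  obtain ⟨h1, h3⟩ :=
    mem_maximalIdeal_of_sq_sub_mul_sq_mem hγ (mem_maximalIdeal_of_mul_mem_sq ha2 hsq)
  intro i
  fin_cases i <;> assumption

theorem anisotropic_normForm_of_isDiscreteValuationRing [IsDomain R] [IsDiscreteValuationRing R]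
    (ha : a ∈ maximalIdeal R) (ha2 : a ∉ maximalIdeal R ^ 2) (hγ : ¬IsSquare (residue R γ)) :
    (normForm a γ).Anisotropic :=
  anisotropic_of_forall_mem_maximalIdeal fun _ ↦
    forall_mem_maximalIdeal_of_normForm_eq_zero ha ha2 hγ

end LocalRing

theorem anisotropic_normForm_of_isDedekindDomain {R : Type*} [CommRing R] [IsDedekindDomain R]
    {𝔭 : Ideal R} [𝔭.IsPrime] (hbot : 𝔭 ≠ ⊥) {a γ : R} (ha : a ∈ 𝔭) (ha2 : a ∉ 𝔭 ^ 2)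
    (hγ : ¬IsSquare (Ideal.Quotient.mk 𝔭 γ)) : (normForm a γ).Anisotropic := by
  have : 𝔭.IsMaximal := Ideal.IsPrime.isMaximal ‹_› hbot
  let Rₚ := Localization.AtPrime 𝔭
  have : IsDiscreteValuationRing Rₚ :=
    IsLocalization.AtPrime.isDiscreteValuationRing_of_dedekind_domain R hbot Rₚ
  refine anisotropic_normForm_of_injective
    (IsLocalization.injective Rₚ 𝔭.primeCompl_le_nonZeroDivisors)
    (anisotropic_normForm_of_isDiscreteValuationRing ?_ ?_ ?_)
  · rw [← IsLocalization.AtPrime.map_eq_maximalIdeal 𝔭 Rₚ]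
    exact Ideal.mem_map_of_mem _ ha
  · rwa [← Ideal.mem_comap, ← Ideal.under_def,
      IsLocalization.AtPrime.under_maximalIdeal_pow 𝔭 Rₚ]
  · let e := IsLocalization.AtPrime.equivQuotMaximalIdeal 𝔭 Rₚ
    show ¬IsSquare (e (Ideal.Quotient.mk 𝔭 γ))
    exact fun hsq ↦ hγ (e.symm_apply_apply (Ideal.Quotient.mk 𝔭 γ) ▸ hsq.map e.symm)

end QuaternionAlgebra

/-- Lemma 2 of the paper: if `𝔭` is a nonzero prime of the ring of integers of
a number field `F`, `a` has `𝔭`-adic valuation exactly 1 (i.e. `a ∈ 𝔭`,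
`a ∉ 𝔭²`), and `γ` is not a square modulo `𝔭`, then `ℍ[F, a, γ]` is a
division algebra. -/
theorem quaternionAlgebra_division_of_valuation_one
    (F : Type*) [Field F] [NumberField F]
    (𝔭 : Ideal (𝓞 F)) (hprime : 𝔭.IsPrime) (hbot : 𝔭 ≠ ⊥)
    (a : 𝓞 F) (ha1 : a ∈ 𝔭) (ha2 : a ∉ 𝔭 ^ 2)
    (γ : 𝓞 F) (hγ : ¬ IsSquare (Ideal.Quotient.mk 𝔭 γ)) :
    ∀ q : ℍ[F, (a : F), (γ : F)], q ≠ 0 → IsUnit q := fun _ ↦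
  QuaternionAlgebra.isUnit_of_anisotropic_normForm <|
    QuaternionAlgebra.anisotropic_normForm_of_isFractionRing F <|
      QuaternionAlgebra.anisotropic_normForm_of_isDedekindDomain hbot ha1 ha2 hγ
end

section
/- Let ζ₇ = exp(2πi/7) ∈ ℂ, ξ = ζ₇ + ζ₇⁻¹, and let L₁ be the smallest subfield of ℂ containing i√3 and ξ (that is, L₁ = ℚ(√−3, ξ)). Then ξ − 1 is not a square in L₁: there is no v ∈ L₁ with v² = ξ − 1. -/
/-!
Write `L₁ = K(√-3)` with `K = ℚ(ξ) ⊂ ℝ`. An element of `L₁` is `a + b√-3` with `a, b ∈ K` real,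
and `(a + b√-3)² = ξ - 1` forces `ab = 0`. If `a = 0`, then `-3b² = ξ - 1 > 0`, absurd. If `b = 0`,
then `ξ - 1` is a square in `K`; the conjugation `ζ ↦ ζ²` of `ℚ(ζ₇)` sends `ξ` to `2 cos (4π/7)`,
so `2 cos (4π/7) - 1 < 0` would be a real square.
-/

open Complex Polynomial
open scoped Real

theorem IsPrimitiveRoot.aeval_eq_zero_of_aeval_eq_zero {K : Type*} [Field K] [CharZero K]
    {n : ℕ} (hn : 0 < n) {μ μ' : K} (hμ : IsPrimitiveRoot μ n) (hμ' : IsPrimitiveRoot μ' n)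
    {p : ℚ[X]} (hp : aeval μ p = 0) : aeval μ' p = 0 := by
  obtain ⟨q, rfl⟩ := minpoly.dvd ℚ μ hp
  rw [map_mul, ← cyclotomic_eq_minpoly_rat hμ hn, aeval_def, eval₂_eq_eval_map, map_cyclotomic,
    (hμ'.isRoot_cyclotomic hn).eq_zero, zero_mul]

theorem IsPrimitiveRoot.aeval_add_inv_eq_zero_of_aeval_add_inv_eq_zero {K : Type*} [Field K]
    [CharZero K] {n : ℕ} (hn : 0 < n) {μ μ' : K} (hμ : IsPrimitiveRoot μ n)
    (hμ' : IsPrimitiveRoot μ' n) {p : ℚ[X]} (hp : aeval (μ + μ⁻¹) p = 0) :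
    aeval (μ' + μ'⁻¹) p = 0 := by
  have hcomp (ν : K) (hν : IsPrimitiveRoot ν n) :
      aeval ν (p.comp (X + X ^ (n - 1))) = aeval (ν + ν⁻¹) p := by
    have hinv : ν⁻¹ = ν ^ (n - 1) :=
      inv_eq_of_mul_eq_one_right (by rw [mul_pow_sub_one hn.ne', hν.pow_eq_one])
    simp only [aeval_comp, map_add, map_pow, aeval_X, hinv]
  rw [← hcomp μ' hμ']
  exact hμ.aeval_eq_zero_of_aeval_eq_zero hn hμ' (by rw [hcomp μ hμ, hp])

theorem Algebra.exists_add_mul_of_mem_adjoin_insert {R A : Type*} [CommRing R] [CommRing A]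
    [Algebra R A] {α : A} {s : Set A} {r : R} (hα : α ^ 2 = algebraMap R A r) {v : A}
    (hv : v ∈ adjoin R (insert α s)) : ∃ a ∈ adjoin R s, ∃ b ∈ adjoin R s, v = a + b * α := by
  induction hv using adjoin_induction with
  | mem y hy =>
    rcases hy with rfl | hy
    · exact ⟨0, zero_mem _, 1, one_mem _, by ring⟩
    · exact ⟨y, subset_adjoin hy, 0, zero_mem _, by ring⟩
  | algebraMap t => exact ⟨algebraMap R A t, algebraMap_mem _ t, 0, zero_mem _, by ring⟩
  | add x y _ _ ihx ihy =>
    obtain ⟨a, ha, b, hb, rfl⟩ := ihx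
    obtain ⟨c, hc, d, hd, rfl⟩ := ihy
    exact ⟨a + c, add_mem ha hc, b + d, add_mem hb hd, by ring⟩
  | mul x y _ _ ihx ihy =>
    obtain ⟨a, ha, b, hb, rfl⟩ := ihx
    obtain ⟨c, hc, d, hd, rfl⟩ := ihy
    refine ⟨a * c + algebraMap R A r * (b * d),
      add_mem (mul_mem ha hc) (mul_mem (algebraMap_mem _ r) (mul_mem hb hd)),
      a * d + b * c, add_mem (mul_mem ha hd) (mul_mem hb hc), ?_⟩
    linear_combination (b * d) * hα

theorem Complex.ofReal_aeval {R : Type*} [CommSemiring R] [Algebra R ℝ] [Algebra R ℂ]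
    [IsScalarTower R ℝ ℂ] (x : ℝ) (p : R[X]) : (aeval x p : ℂ) = aeval (x : ℂ) p :=
  (aeval_algebraMap_apply ℂ x p).symm

theorem Complex.exp_mul_I_add_inv (x : ℝ) :
    exp (x * I) + (exp (x * I))⁻¹ = ((2 * Real.cos x : ℝ) : ℂ) := by
  rw [← exp_neg, ← neg_mul, exp_mul_I, exp_mul_I]
  push_cast
  simp only [cos_neg, sin_neg]
  ring

theorem Complex.exp_two_pi_mul_I_mul_div_add_inv (k n : ℕ) :
    exp (2 * π * I * (k / n)) + (exp (2 * π * I * (k / n)))⁻¹ =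
      ((2 * Real.cos (2 * π * k / n) : ℝ) : ℂ) := by
  rw [← exp_mul_I_add_inv]
  push_cast
  ring_nf

theorem Complex.eq_of_add_mul_I_sqrt_three_sq_eq_ofReal {a b c : ℝ}
    (h : ((a : ℂ) + b * (I * √3)) ^ 2 = c) : a ^ 2 - 3 * b ^ 2 = c ∧ a * b = 0 := by
  have h3 : √3 ^ 2 = 3 := Real.sq_sqrt (by norm_num)
  have hre := congrArg re h
  have him := congrArg im h
  simp only [sq, mul_re, mul_im, add_re, add_im, ofReal_re, ofReal_im, I_re, I_im] at hre him
  refine ⟨by linear_combination hre + b ^ 2 * h3, ?_⟩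
  have h0 : a * b * (2 * √3) = 0 := by linear_combination him
  exact (mul_eq_zero.mp h0).resolve_right (by positivity)

theorem exists_aeval_add_aeval_mul_of_mem_adjoin {x : ℝ} (hx : IsAlgebraic ℚ (x : ℂ)) {v : ℂ}
    (hv : v ∈ IntermediateField.adjoin ℚ {I * √3, (x : ℂ)}) :
    ∃ p q : ℚ[X], v = aeval x p + aeval x q * (I * √3) := by
  have hα : (I * √3) ^ 2 = algebraMap ℚ ℂ (-3) := by
    rw [mul_pow, I_sq, ← ofReal_pow, Real.sq_sqrt (by norm_num)]
    norm_num
  have halg : ∀ y ∈ ({I * √3, (x : ℂ)} : Set ℂ), IsAlgebraic ℚ y := by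
    rintro _ (rfl | rfl)
    exacts [.of_pow two_pos (hα ▸ isAlgebraic_algebraMap _), hx]
  rw [← IntermediateField.mem_toSubalgebra,
    IntermediateField.adjoin_toSubalgebra_of_isAlgebraic halg] at hv
  obtain ⟨a, ha, b, hb, rfl⟩ := Algebra.exists_add_mul_of_mem_adjoin_insert hα hv
  rw [Algebra.adjoin_singleton_eq_range_aeval] at ha hb
  obtain ⟨p, rfl⟩ := ha
  obtain ⟨q, rfl⟩ := hb
  exact ⟨p, q, by simp only [AlgHom.toRingHom_eq_coe, RingHom.coe_coe, ofReal_aeval]⟩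

theorem one_lt_two_mul_cos_two_pi_div_seven : 1 < 2 * Real.cos (2 * π / 7) := by
  have h := Real.cos_lt_cos_of_nonneg_of_le_pi (x := 2 * π / 7) (y := π / 3)
    (by positivity) (by linarith [Real.pi_pos]) (by linarith [Real.pi_pos])
  rw [Real.cos_pi_div_three] at h
  linarith

theorem two_mul_cos_four_pi_div_seven_lt_one : 2 * Real.cos (4 * π / 7) < 1 := by
  have h := Real.cos_nonpos_of_pi_div_two_le_of_le (x := 4 * π / 7)
    (by linarith [Real.pi_pos]) (by linarith [Real.pi_pos])
  linarith

theorem aeval_two_mul_cos_two_pi_div_seven_sq_ne (p : ℚ[X]) :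
    aeval (2 * Real.cos (2 * π / 7)) p ^ 2 ≠ 2 * Real.cos (2 * π / 7) - 1 := by
  intro hp
  have hroot (k : ℕ) :
      aeval (exp (2 * π * I * (k / (7 : ℕ))) + (exp (2 * π * I * (k / (7 : ℕ))))⁻¹)
        (p ^ 2 - (X - 1)) =
      (aeval (2 * Real.cos (2 * π * k / 7)) p ^ 2 - (2 * Real.cos (2 * π * k / 7) - 1) : ℝ) := by
    rw [exp_two_pi_mul_I_mul_div_add_inv, ← ofReal_aeval]
    simp
  have hζ := isPrimitiveRoot_exp_of_coprime 1 7 (by norm_num) (by norm_num)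
  have hζ' := isPrimitiveRoot_exp_of_coprime 2 7 (by norm_num) (by norm_num)
  have h := hζ.aeval_add_inv_eq_zero_of_aeval_add_inv_eq_zero (by norm_num) hζ'
    (by rw [hroot, Nat.cast_one, mul_one, hp, sub_self, ofReal_zero])
  rw [hroot, ofReal_eq_zero, sub_eq_zero, Nat.cast_ofNat,
    show 2 * π * 2 / 7 = 4 * π / 7 by ring] at h
  nlinarith [two_mul_cos_four_pi_div_seven_lt_one]

/-- Example 3 of the paper (anisotropy for `C₁`): with `ξ = ζ₇ + ζ₇⁻¹` and
`L₁ = ℚ(√−3, ξ) ⊂ ℂ`, the element `ξ − 1` is not a square in `L₁`. -/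
theorem xi7_sub_one_not_square
    (ζ : ℂ) (hζ : ζ = Complex.exp (2 * Real.pi * Complex.I / 7))
    (ξ : ℂ) (hξ : ξ = ζ + ζ⁻¹)
    (L₁ : IntermediateField ℚ ℂ)
    (hL : L₁ = IntermediateField.adjoin ℚ {Complex.I * Real.sqrt 3, ξ}) :
    ∀ v : ℂ, v ∈ L₁ → v ^ 2 ≠ ξ - 1 := by
  intro v hv hsq
  have hprim : IsPrimitiveRoot ζ 7 := hζ ▸ isPrimitiveRoot_exp 7 (by norm_num)
  have hξint : IsIntegral ℤ ξ :=
    hξ ▸ (hprim.isIntegral (by norm_num)).add (hprim.inv.isIntegral (by norm_num))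
  have hξalg : IsAlgebraic ℚ ξ := hξint.tower_top.isAlgebraic
  have hξx : ξ = (2 * Real.cos (2 * π / 7) : ℝ) := by
    rw [hξ, hζ, ← exp_mul_I_add_inv]
    push_cast
    ring_nf
  subst hL
  rw [hξx] at hv hsq hξalg
  obtain ⟨p, q, rfl⟩ := exists_aeval_add_aeval_mul_of_mem_adjoin hξalg hv
  rw [← ofReal_one, ← ofReal_sub] at hsq
  obtain ⟨hre, hpq⟩ := eq_of_add_mul_I_sqrt_three_sq_eq_ofReal hsq
  rcases mul_eq_zero.mp hpq with hp | hq
  · nlinarith [one_lt_two_mul_cos_two_pi_div_seven]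
  · exact aeval_two_mul_cos_two_pi_div_seven_sq_ne p (by rw [← hre, hq]; ring)
end

section
/- Let ζ₇ = exp(2πi/7) ∈ ℂ, ξ = ζ₇ + ζ₇⁻¹, and let L₂ be the smallest subfield of ℂ containing i√5 and ξ (that is, L₂ = ℚ(√−5, ξ)). Then (3/2)(ξ² − 1) is not a square in L₂: there is no w ∈ L₂ with w² = (3/2)(ξ² − 1). -/
/-!
`ξ = 2 cos (2π/7)` is a real root of `X³ + X² - 2X - 1`, irreducible over `ℚ` (it is so mod 2),
and `ξ² - 2 = 2 cos (4π/7)` is another root, lying in `(-1, 0)`. As `(3/2)(ξ² - 1) > 0`, a square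
root `w` of it in `L₂` is real. Take an embedding `φ : L₂ → ℂ` with `φ ξ = ξ² - 2`; it commutes
with complex conjugation on the generators (`φ (i√5)` is again a square root of `-5`, hence purely
imaginary), hence everywhere, so `φ w` is real. But `φ(w)² = (3/2)((ξ² - 2)² - 1) < 0`.
-/

open Complex ComplexConjugate Polynomial IntermediateField

lemma IsPrimitiveRoot.add_inv_cubic_eq_zero {K : Type*} [Field K] {ζ : K}
    (hζ : IsPrimitiveRoot ζ 7) :
    (ζ + ζ⁻¹) ^ 3 + (ζ + ζ⁻¹) ^ 2 - 2 * (ζ + ζ⁻¹) - 1 = 0 := by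
  have hsum := hζ.geom_sum_eq_zero (by norm_num)
  simp only [Finset.sum_range_succ, Finset.sum_range_zero] at hsum
  have hζ0 : ζ ≠ 0 := hζ.ne_zero (by norm_num)
  field_simp
  linear_combination hsum

lemma Complex.exp_two_pi_I_div_add_inv (n : ℕ) :
    exp (2 * Real.pi * I / n) + (exp (2 * Real.pi * I / n))⁻¹
      = ((2 * Real.cos (2 * Real.pi / n) : ℝ) : ℂ) := by
  rw [← exp_neg]
  push_cast
  rw [two_cos]
  ring_nf

lemma two_cos_two_pi_div_seven_cubic_eq_zero :
    (2 * Real.cos (2 * Real.pi / 7)) ^ 3 + (2 * Real.cos (2 * Real.pi / 7)) ^ 2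
      - 2 * (2 * Real.cos (2 * Real.pi / 7)) - 1 = 0 := by
  have h := (isPrimitiveRoot_exp 7 (by norm_num)).add_inv_cubic_eq_zero
  rw [exp_two_pi_I_div_add_inv] at h
  exact_mod_cast h

lemma one_lt_two_cos_two_pi_div_seven : 1 < 2 * Real.cos (2 * Real.pi / 7) := by
  have h := Real.cos_lt_cos_of_nonneg_of_le_pi (x := 2 * Real.pi / 7) (y := Real.pi / 3)
    (by positivity) (by linarith [Real.pi_pos]) (by linarith [Real.pi_pos])
  rw [Real.cos_pi_div_three] at h
  linarith

lemma sq_two_cos_two_pi_div_seven_mem_Ioo :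
    (2 * Real.cos (2 * Real.pi / 7)) ^ 2 ∈ Set.Ioo 1 2 := by
  have h_cubic := two_cos_two_pi_div_seven_cubic_eq_zero
  have h_gt := one_lt_two_cos_two_pi_div_seven
  -- `t (t² - 2) = 1 - t² < 0` for `t = 2 cos (2π/7)`
  constructor <;> nlinarith

lemma cubic_eq_zero_sq_sub_two {R : Type*} [CommRing R] {x : R}
    (hx : x ^ 3 + x ^ 2 - 2 * x - 1 = 0) :
    (x ^ 2 - 2) ^ 3 + (x ^ 2 - 2) ^ 2 - 2 * (x ^ 2 - 2) - 1 = 0 := by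
  linear_combination (x ^ 3 - x ^ 2 - 2 * x + 1) * hx

lemma irreducible_X_pow_three_add_X_pow_two_add_one_zmod_two :
    Irreducible (X ^ 3 + X ^ 2 + 1 : (ZMod 2)[X]) := by
  have hm : (X ^ 3 + X ^ 2 + 1 : (ZMod 2)[X]).Monic := by monicity!
  have hd : (X ^ 3 + X ^ 2 + 1 : (ZMod 2)[X]).natDegree = 3 := by compute_degree!
  rw [irreducible_iff_roots_eq_zero_of_degree_le_three (by omega) (by omega),
    Multiset.eq_zero_iff_forall_notMem]
  intro a
  rw [mem_roots hm.ne_zero]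
  simp only [IsRoot, eval_add, eval_pow, eval_X, eval_one]
  revert a
  decide

lemma irreducible_X_pow_three_add_X_pow_two_sub_two_mul_X_sub_one :
    Irreducible (X ^ 3 + X ^ 2 - 2 * X - 1 : ℚ[X]) := by
  have hmonic : (X ^ 3 + X ^ 2 - 2 * X - 1 : ℤ[X]).Monic := by monicity!
  have hmod2 : (X ^ 3 + X ^ 2 - 2 * X - 1 : ℤ[X]).map (Int.castRingHom (ZMod 2))
      = X ^ 3 + X ^ 2 + 1 := by
    simp only [Polynomial.map_add, Polynomial.map_sub, Polynomial.map_pow, Polynomial.map_mul,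
      Polynomial.map_X, Polynomial.map_one, Polynomial.map_ofNat]
    ring_nf
    rw [CharTwo.neg_eq, ← map_ofNat C 2, show (2 : ZMod 2) = 0 from rfl, map_zero]
    ring
  have hZ := hmonic.irreducible_of_irreducible_map _ _
    (hmod2 ▸ irreducible_X_pow_three_add_X_pow_two_add_one_zmod_two)
  simpa using (IsPrimitive.Int.irreducible_iff_irreducible_map_cast hmonic.isPrimitive).mp hZ

lemma minpoly_eq_of_cubic_eq_zero {K : Type*} [Field K] [Algebra ℚ K] {x : K}
    (hx : x ^ 3 + x ^ 2 - 2 * x - 1 = 0) : minpoly ℚ x = X ^ 3 + X ^ 2 - 2 * X - 1 := by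
  refine (minpoly.eq_of_irreducible_of_monic
    irreducible_X_pow_three_add_X_pow_two_sub_two_mul_X_sub_one ?_ (by monicity!)).symm
  simpa only [map_add, map_sub, map_pow, map_mul, aeval_X, map_one, map_ofNat] using hx

namespace Complex

lemma conj_eq_of_sq_eq_ofReal_pos {z : ℂ} {r : ℝ} (hr : 0 < r) (h : z ^ 2 = r) :
    conj z = z := by
  have hre := congrArg re h
  have him := congrArg im h
  simp only [sq, mul_re, mul_im, ofReal_re, ofReal_im] at hre him
  rw [conj_eq_iff_im]
  rcases mul_eq_zero.mp (show z.re * z.im = 0 by linarith) with h | h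
  · nlinarith
  · exact h

lemma conj_eq_neg_of_sq_eq_ofReal_neg {z : ℂ} {r : ℝ} (hr : r < 0) (h : z ^ 2 = r) :
    conj z = -z := by
  have hre := congrArg re h
  have him := congrArg im h
  simp only [sq, mul_re, mul_im, ofReal_re, ofReal_im] at hre him
  have hz : z.re = 0 := by
    rcases mul_eq_zero.mp (show z.re * z.im = 0 by linarith) with h | h
    · exact h
    · nlinarith
  apply Complex.ext <;> simp [hz]

lemma I_mul_sqrt_sq {d : ℝ} (hd : 0 ≤ d) : (I * Real.sqrt d) ^ 2 = -d := by
  rw [mul_pow, I_sq, ← ofReal_pow, Real.sq_sqrt hd, neg_one_mul]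

lemma nonneg_of_conj_eq_of_sq_eq_ofReal {z : ℂ} {r : ℝ} (hz : conj z = z)
    (h : z ^ 2 = r) : 0 ≤ r := by
  rw [← conj_eq_iff_re.mp hz, ← ofReal_pow, ofReal_inj] at h
  exact h ▸ sq_nonneg _

end Complex

namespace IntermediateField

section Conj

variable {S : Set ℂ}

lemma conj_mem_adjoin (hS : ∀ s ∈ S, conj s ∈ adjoin ℚ S) {x : ℂ} (hx : x ∈ adjoin ℚ S) :
    conj x ∈ adjoin ℚ S := by
  have hmap : conj x ∈ (adjoin ℚ S).map (starRingEnd ℂ).toRatAlgHom := ⟨x, hx, rfl⟩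
  rw [adjoin_map] at hmap
  exact adjoin_le_iff.mpr (by rintro _ ⟨s, hs, rfl⟩; exact hS s hs) hmap

noncomputable def conjRestrict (K : IntermediateField ℚ ℂ) (hK : ∀ x ∈ K, conj x ∈ K) :
    K →ₐ[ℚ] K :=
  ((starRingEnd ℂ).toRatAlgHom.comp K.val).codRestrict K.toSubalgebra fun x ↦ hK x x.2

lemma conj_apply_eq_of_conj_eq (hS : ∀ s ∈ S, conj s ∈ adjoin ℚ S) (φ : adjoin ℚ S →ₐ[ℚ] ℂ)
    (hφ : ∀ y z : adjoin ℚ S, (y : ℂ) ∈ S → (z : ℂ) = conj (y : ℂ) → conj (φ y) = φ z)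
    {x : adjoin ℚ S} (hx : conj (x : ℂ) = x) : conj (φ x) = φ x := by
  let τ := conjRestrict (adjoin ℚ S) fun _ ↦ conj_mem_adjoin hS
  have hcomm : (starRingEnd ℂ).toRatAlgHom.comp φ = φ.comp τ :=
    adjoin_algHom_ext ℚ fun _ hs ↦ hφ _ _ hs rfl
  have hτx : τ x = x := Subtype.ext hx
  simpa [hτx] using DFunLike.congr_fun hcomm x

end Conj

section AdjoinPair

variable {a x : ℂ} {q : ℚ}

lemma exists_algHom_adjoin_pair_gen₂_eq_sq_sub_two (ha : a ^ 2 = q)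
    (hx : x ^ 3 + x ^ 2 - 2 * x - 1 = 0) :
    ∃ φ : ℚ⟮a, x⟯ →ₐ[ℚ] ℂ, φ (AdjoinPair.gen₂ ℚ a x) = x ^ 2 - 2 := by
  refine exists_algHom_adjoin_of_splits_of_aeval ?_ _ ?_
  · rintro s (rfl | rfl)
    · refine ⟨.of_pow two_pos ?_, IsAlgClosed.splits _⟩
      rw [ha]
      exact isIntegral_algebraMap
    · refine ⟨minpoly.ne_zero_iff.mp ?_, IsAlgClosed.splits _⟩
      rw [minpoly_eq_of_cubic_eq_zero hx]
      exact (by monicity! : Monic (X ^ 3 + X ^ 2 - 2 * X - 1 : ℚ[X])).ne_zero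
  · rw [minpoly_eq_of_cubic_eq_zero hx]
    simpa only [map_add, map_sub, map_pow, map_mul, aeval_X, map_one, map_ofNat]
      using cubic_eq_zero_sq_sub_two hx

lemma conj_apply_eq_self_of_adjoin_pair (hq : q < 0) (ha : a ^ 2 = q) (hx : conj x = x)
    (φ : ℚ⟮a, x⟯ →ₐ[ℚ] ℂ) (hφx : conj (φ (AdjoinPair.gen₂ ℚ a x)) = φ (AdjoinPair.gen₂ ℚ a x))
    {y : ℚ⟮a, x⟯} (hy : conj (y : ℂ) = y) : conj (φ y) = φ y := by
  have ha_conj : conj a = -a := conj_eq_neg_of_sq_eq_ofReal_neg (r := q) (by exact_mod_cast hq)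
    (by rw [ha]; rfl)
  refine conj_apply_eq_of_conj_eq ?_ φ ?_ hy
  · rintro s (rfl | rfl)
    · rw [ha_conj]
      exact neg_mem (mem_adjoin_pair_left ℚ _ x)
    · rw [hx]
      exact mem_adjoin_pair_right ℚ a _
  · intro u v hu hv
    rcases hu with hu | hu
    · have hu_sq : u ^ 2 = algebraMap ℚ _ q := Subtype.ext (by push_cast; rw [hu, ha]; rfl)
      have hvu : v = -u := Subtype.ext (by push_cast; rw [hv, hu, ha_conj])
      rw [hvu, map_neg]
      exact conj_eq_neg_of_sq_eq_ofReal_neg (r := q) (by exact_mod_cast hq)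
        (by rw [← map_pow, hu_sq, AlgHom.commutes]; rfl)
    · have hvu : v = u := Subtype.ext (by rw [hv, hu, hx])
      have hu_gen : u = AdjoinPair.gen₂ ℚ a x := Subtype.ext hu
      rw [hvu, hu_gen, hφx]

end AdjoinPair

end IntermediateField

/-- Example 3 of the paper (anisotropy for `C₂`): with `ξ = ζ₇ + ζ₇⁻¹` and
`L₂ = ℚ(√−5, ξ) ⊂ ℂ`, the element `(3/2)(ξ² − 1)` is not a square in `L₂`. -/
theorem xi7_quadratic_not_square
    (ζ : ℂ) (hζ : ζ = Complex.exp (2 * Real.pi * Complex.I / 7))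
    (ξ : ℂ) (hξ : ξ = ζ + ζ⁻¹)
    (L₂ : IntermediateField ℚ ℂ)
    (hL : L₂ = IntermediateField.adjoin ℚ {Complex.I * Real.sqrt 5, ξ}) :
    ∀ w : ℂ, w ∈ L₂ → w ^ 2 ≠ (3 / 2) * (ξ ^ 2 - 1) := by
  subst hL
  intro w hw hw_sq
  set t := 2 * Real.cos (2 * Real.pi / 7)
  have hξt : ξ = t := by rw [hξ, hζ]; exact_mod_cast exp_two_pi_I_div_add_inv 7
  obtain ⟨ht_sq_gt, ht_sq_lt⟩ := sq_two_cos_two_pi_div_seven_mem_Ioo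
  have hξ_cubic : ξ ^ 3 + ξ ^ 2 - 2 * ξ - 1 = 0 := by
    rw [hξt]; exact_mod_cast two_cos_two_pi_div_seven_cubic_eq_zero
  have hi5 : (I * Real.sqrt 5) ^ 2 = ((-5 : ℚ) : ℂ) := by
    rw [I_mul_sqrt_sq (by norm_num)]; push_cast; rfl
  obtain ⟨φ, hφ⟩ := exists_algHom_adjoin_pair_gen₂_eq_sq_sub_two hi5 hξ_cubic
  have hw_real : conj w = w :=
    conj_eq_of_sq_eq_ofReal_pos (r := 3 / 2 * (t ^ 2 - 1)) (by nlinarith)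
      (by rw [hw_sq, hξt]; push_cast; ring)
  have hφw_real : conj (φ ⟨w, hw⟩) = φ ⟨w, hw⟩ :=
    conj_apply_eq_self_of_adjoin_pair (by norm_num) hi5 (by rw [hξt, conj_ofReal]) φ
      (by rw [hφ, hξt]; simp [map_ofNat]) hw_real
  have hφw_sq : φ ⟨w, hw⟩ ^ 2 = ((3 / 2 * ((t ^ 2 - 2) ^ 2 - 1) : ℝ) : ℂ) := by
    have hsq : (⟨w, hw⟩ : ℚ⟮I * Real.sqrt 5, ξ⟯) ^ 2
        = 3 / 2 * (AdjoinPair.gen₂ ℚ (I * Real.sqrt 5) ξ ^ 2 - 1) :=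
      Subtype.ext (by push_cast; exact hw_sq)
    rw [← map_pow, hsq]
    simp only [map_mul, map_sub, map_pow, map_div₀, map_ofNat, map_one]
    rw [hφ, hξt]
    push_cast
    ring
  nlinarith [nonneg_of_conj_eq_of_sq_eq_ofReal hφw_real hφw_sq]
end

section
/- Let ζ₅ = exp(2πi/5) ∈ ℂ and let L be the smallest subfield of ℂ containing ζ₅ and i√3 (that is, L = ℚ(ζ₅, √−3)). Then the element α = 3ζ₅³ + 4ζ₅² + 3ζ₅ is not a square in L: there is no v ∈ L with v² = α. Consequently, the quadratic form ⟨γ, −θ⟩ over L with γ = 1 − ζ₅ and θ = (ζ₅ + 1)/(ζ₅ − 1) is anisotropic: v₁²γ − v₂²θ = 0 with v₁, v₂ ∈ L implies v₁ = v₂ = 0. -/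
open Complex

/-!
`L = ℚ(ζ₅, √−3)` is the fifteenth cyclotomic field `ℚ(μ)`, `μ = ζ₅ · (−1 + √−3)/2`, whose ring of
integers is `ℤ[μ] ≅ ℤ[X]/(Φ₁₅)`. A square root in `L` of an element of `ℤ[μ]` is integral, hence
lies in `ℤ[μ]`, so the equation `v² = x` can be pushed along any ring map `ℤ[μ] → 𝔽₃₁` sending `μ`
to a root of `Φ₁₅` (such roots exist as `31 ≡ 1 mod 15`). For suitable roots the images of `α` and
of `−5α` are nonsquares mod 31; the latter gives anisotropy, since `θ / γ = −α / 5`.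
-/

open Polynomial IntermediateField

namespace IsPrimitiveRoot

theorem of_prime {M : Type*} [CommMonoid M] {p : ℕ} (hp : p.Prime) {x : M} (h : x ^ p = 1)
    (h1 : x ≠ 1) : IsPrimitiveRoot x p :=
  have : Fact p.Prime := ⟨hp⟩
  IsPrimitiveRoot.iff_orderOf.mpr (orderOf_eq_prime h h1)

theorem mul_of_coprime {M : Type*} [CommMonoid M] {x y : M} {m n : ℕ} (hx : IsPrimitiveRoot x m)
    (hy : IsPrimitiveRoot y n) (hmn : m.Coprime n) : IsPrimitiveRoot (x * y) (m * n) := by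
  rw [IsPrimitiveRoot.iff_orderOf, hx.eq_orderOf, hy.eq_orderOf]
  exact (Commute.all x y).orderOf_mul_eq_mul_orderOf_of_coprime
    (hx.eq_orderOf ▸ hy.eq_orderOf ▸ hmn)

theorem add_one_div_sub_one_div_one_sub {K : Type*} [Field K] [CharZero K] {ζ : K}
    (hζ : IsPrimitiveRoot ζ 5) :
    (ζ + 1) / (ζ - 1) / (1 - ζ) = -(3 * ζ ^ 3 + 4 * ζ ^ 2 + 3 * ζ) / 5 := by
  have hζ1 : ζ - 1 ≠ 0 := sub_ne_zero.mpr (hζ.ne_one (by norm_num))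
  have hΦ : ζ ^ 4 + ζ ^ 3 + ζ ^ 2 + ζ + 1 = 0 := by
    simpa [Finset.sum_range_succ, add_comm, add_left_comm, add_assoc] using
      hζ.geom_sum_eq_zero (by norm_num)
  rw [div_eq_div_iff (by rwa [← neg_sub, neg_ne_zero]) (by norm_num), div_mul_eq_mul_div,
    div_eq_iff hζ1]
  linear_combination (5 - 3 * ζ) * hΦ

variable {K : Type*} [Field K] [CharZero K] {n : ℕ} [NeZero n] {μ : K}

theorem exists_aeval_eq_of_isIntegral (hμ : IsPrimitiveRoot μ n) {v : K} (hv : v ∈ ℚ⟮μ⟯)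
    (hint : IsIntegral ℤ v) : ∃ P : ℤ[X], aeval μ P = v := by
  have : IsCyclotomicExtension {n} ℚ ℚ⟮μ⟯ := by
    change IsCyclotomicExtension {n} ℚ ℚ⟮μ⟯.toSubalgebra
    rw [adjoin_simple_toSubalgebra_of_isAlgebraic
      ((hμ.isIntegral n.pos_of_neZero).tower_top (A := ℚ)).isAlgebraic]
    exact hμ.adjoin_isCyclotomicExtension ℚ
  have := IsCyclotomicExtension.Rat.isIntegralClosure_adjoin_singleton
    (coe_submonoidClass_iff.mp hμ : IsPrimitiveRoot (AdjoinSimple.gen ℚ μ) n)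
  have hint' : IsIntegral ℤ (⟨v, hv⟩ : ℚ⟮μ⟯) :=
    (isIntegral_algebraMap_iff (algebraMap ℚ⟮μ⟯ K).injective).mp hint
  obtain ⟨⟨y, hy⟩, hyv⟩ :=
    (IsIntegralClosure.isIntegral_iff (A := Algebra.adjoin ℤ {AdjoinSimple.gen ℚ μ})).mp hint'
  rw [Algebra.adjoin_singleton_eq_range_aeval] at hy
  obtain ⟨P, rfl⟩ := hy
  exact ⟨P, (aeval_algebraMap_apply K (AdjoinSimple.gen ℚ μ) P).trans (congrArg Subtype.val hyv)⟩

theorem aeval_eq_zero_of_isRoot_cyclotomic (hμ : IsPrimitiveRoot μ n) {R : Type*} [CommRing R]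
    {r : R} (hr : (cyclotomic n R).IsRoot r) {F : ℤ[X]} (hF : aeval μ F = 0) : aeval r F = 0 := by
  obtain ⟨Q, rfl⟩ : cyclotomic n ℤ ∣ F := by
    rw [cyclotomic_eq_minpoly hμ n.pos_of_neZero]
    exact minpoly.isIntegrallyClosed_dvd (hμ.isIntegral n.pos_of_neZero) hF
  rw [map_mul, aeval_def, eval₂_eq_eval_map, map_cyclotomic, hr.eq_zero, zero_mul]

theorem sq_ne_aeval_of_not_isSquare (hμ : IsPrimitiveRoot μ n) {R : Type*} [CommRing R] {r : R}
    (hr : (cyclotomic n R).IsRoot r) {E : ℤ[X]} (hE : ¬IsSquare (aeval r E)) {v : K}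
    (hv : v ∈ ℚ⟮μ⟯) : v ^ 2 ≠ aeval μ E := by
  intro hvE
  have hint : IsIntegral ℤ v := by
    refine IsIntegral.of_pow two_pos (hvE ▸ ?_)
    exact IsIntegral.of_mem_of_fg _ (hμ.isIntegral n.pos_of_neZero).fg_adjoin_singleton _
      (aeval_mem_adjoin_singleton ℤ μ)
  obtain ⟨P, rfl⟩ := hμ.exists_aeval_eq_of_isIntegral hv hint
  have := hμ.aeval_eq_zero_of_isRoot_cyclotomic hr (F := P ^ 2 - E) (by simp [hvE])
  rw [map_sub, map_pow, sub_eq_zero] at this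
  exact hE ⟨aeval r P, this.symm.trans (sq _)⟩

end IsPrimitiveRoot

theorem Complex.isPrimitiveRoot_neg_one_add_I_mul_sqrt_three_div_two :
    IsPrimitiveRoot ((-1 + I * Real.sqrt 3) / 2) 3 := by
  have ht : (I * Real.sqrt 3) ^ 2 = -3 := by
    rw [mul_pow, I_sq, ← ofReal_pow, Real.sq_sqrt (by norm_num)]
    norm_num
  refine .of_prime Nat.prime_three (by linear_combination (-1 + I * Real.sqrt 3 - 2) / 8 * ht) ?_
  intro h
  have h3 : I * Real.sqrt 3 = 3 := by linear_combination 2 * h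
  rw [h3] at ht
  norm_num at ht

theorem Complex.exists_isPrimitiveRoot_fifteen_of_isPrimitiveRoot_five {ζ : ℂ}
    (hζ : IsPrimitiveRoot ζ 5) :
    ∃ μ : ℂ, IsPrimitiveRoot μ 15 ∧ μ ^ 6 = ζ ∧ ℚ⟮ζ, I * Real.sqrt 3⟯ ≤ ℚ⟮μ⟯ := by
  set ω : ℂ := (-1 + I * Real.sqrt 3) / 2
  have hω : IsPrimitiveRoot ω 3 := isPrimitiveRoot_neg_one_add_I_mul_sqrt_three_div_two
  have hζμ : (ζ * ω) ^ 6 = ζ := by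
    linear_combination ζ ^ 6 * (ω ^ 3 + 1) * hω.pow_eq_one + ζ * hζ.pow_eq_one
  have hωμ : (ζ * ω) ^ 10 = ω := by
    linear_combination ω ^ 10 * (ζ ^ 5 + 1) * hζ.pow_eq_one +
      ω * (ω ^ 6 + ω ^ 3 + 1) * hω.pow_eq_one
  refine ⟨ζ * ω, hζ.mul_of_coprime hω (by norm_num), hζμ, ?_⟩
  have hμ := mem_adjoin_simple_self ℚ (ζ * ω)
  rw [adjoin_le_iff, Set.insert_subset_iff, Set.singleton_subset_iff, SetLike.mem_coe,
    SetLike.mem_coe]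
  constructor
  · simpa only [hζμ] using pow_mem hμ 6
  · have h2ω : 2 * (ζ * ω) ^ 10 + 1 ∈ ℚ⟮ζ * ω⟯ :=
      add_mem (mul_mem (ofNat_mem _ 2) (pow_mem hμ 10)) (one_mem _)
    rwa [hωμ, show 2 * ω + 1 = I * Real.sqrt 3 by ring] at h2ω

theorem ZMod.isRoot_cyclotomic_mul_of_coprime {p m n : ℕ} (hp : p.Prime) [NeZero m] [NeZero n]
    {a b : ZMod p} (ha : IsPrimitiveRoot a m) (hb : IsPrimitiveRoot b n) (hmn : m.Coprime n) :
    (cyclotomic (m * n) (ZMod p)).IsRoot (a * b) :=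
  have : Fact p.Prime := ⟨hp⟩
  (ha.mul_of_coprime hb hmn).isRoot_cyclotomic (NeZero.pos (m * n))

theorem eq_zero_and_eq_zero_of_sq_mul_sub_sq_mul_eq_zero {F S : Type*} [Field F] [SetLike S F]
    [SubfieldClass S F] {L : S} {a b : F} (ha : a ≠ 0) (hba : ∀ w ∈ L, w ^ 2 ≠ b / a)
    {v₁ v₂ : F} (hv₁ : v₁ ∈ L) (hv₂ : v₂ ∈ L) (h : v₁ ^ 2 * a - v₂ ^ 2 * b = 0) :
    v₁ = 0 ∧ v₂ = 0 := by
  by_cases hv₂0 : v₂ = 0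
  · subst hv₂0
    simpa [ha] using h
  · refine absurd ?_ (hba (v₁ / v₂) (div_mem hv₁ hv₂))
    field_simp
    linear_combination h

/-- Final Example of Section III (4-relay code): with `ζ₅ = exp(2πi/5)` and
`L = ℚ(ζ₅, √−3) ⊂ ℂ`, the element `α = 3ζ₅³ + 4ζ₅² + 3ζ₅` is not a square in
`L`; consequently the quadratic form `⟨γ, −θ⟩` with `γ = 1 − ζ₅`,
`θ = (ζ₅ + 1)/(ζ₅ − 1)` is anisotropic over `L`. -/
theorem alpha_not_square_and_anisotropic
    (ζ : ℂ) (hζ : ζ = Complex.exp (2 * Real.pi * Complex.I / 5))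
    (L : IntermediateField ℚ ℂ)
    (hL : L = IntermediateField.adjoin ℚ {ζ, Complex.I * Real.sqrt 3})
    (α : ℂ) (hα : α = 3 * ζ ^ 3 + 4 * ζ ^ 2 + 3 * ζ)
    (γ θ : ℂ) (hγ : γ = 1 - ζ) (hθ : θ = (ζ + 1) / (ζ - 1)) :
    (∀ v : ℂ, v ∈ L → v ^ 2 ≠ α)
      ∧ (∀ v₁ v₂ : ℂ, v₁ ∈ L → v₂ ∈ L →
          v₁ ^ 2 * γ - v₂ ^ 2 * θ = 0 → v₁ = 0 ∧ v₂ = 0) := by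
  have hζ5 : IsPrimitiveRoot ζ 5 := hζ ▸ by simpa using isPrimitiveRoot_exp 5 (by norm_num)
  obtain ⟨μ, hμ, hμζ, hLμ⟩ := exists_isPrimitiveRoot_fifteen_of_isPrimitiveRoot_five hζ5
  rw [← hL] at hLμ
  have h2 : IsPrimitiveRoot (2 : ZMod 31) 5 := .of_prime (by norm_num) (by decide) (by decide)
  have h8 : IsPrimitiveRoot (8 : ZMod 31) 5 := .of_prime (by norm_num) (by decide) (by decide)
  have h5 : IsPrimitiveRoot (5 : ZMod 31) 3 := .of_prime (by norm_num) (by decide) (by decide)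
  set E : ℤ[X] := (3 * X ^ 3 + 4 * X ^ 2 + 3 * X : ℤ[X]).comp (X ^ 6)
  have hαE : α = aeval μ E := by simp [E, map_ofNat (aeval μ), hα, hμζ]
  refine ⟨fun v hv => hαE ▸ hμ.sq_ne_aeval_of_not_isSquare
    (ZMod.isRoot_cyclotomic_mul_of_coprime (by norm_num) h2 h5 (by norm_num))
    (by simp [E, map_ofNat (aeval (2 * 5 : ZMod 31))]; decide) (hLμ hv), ?_⟩
  have hθγ : θ / γ = -α / 5 := by rw [hθ, hγ, hα, hζ5.add_one_div_sub_one_div_one_sub]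
  intro v₁ v₂ hv₁ hv₂ h
  refine eq_zero_and_eq_zero_of_sq_mul_sub_sq_mul_eq_zero
    (hγ ▸ sub_ne_zero.mpr (hζ5.ne_one (by norm_num)).symm) (fun w hw hw2 => ?_) hv₁ hv₂ h
  have h5w : (5 * w) ^ 2 = aeval μ (-5 * E) := by
    rw [map_mul, ← hαE, map_neg, map_ofNat]
    linear_combination 25 * hw2 + 25 * hθγ
  exact hμ.sq_ne_aeval_of_not_isSquare
    (ZMod.isRoot_cyclotomic_mul_of_coprime (by norm_num) h8 h5 (by norm_num))
    (by simp [E, map_ofNat (aeval (8 * 5 : ZMod 31))]; decide) (mul_mem (ofNat_mem _ 5) (hLμ hw))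
    h5w
end

section
/- Let t : ℂ → ℂ be a ring homomorphism commuting with complex conjugation (t(conj z) = conj(t z) for all z ∈ ℂ), let θ′ > 0 be a real number, and let ζ ∈ ℂ. For an n×n complex matrix B write t(B) for t applied entrywise, and define the 2n×2n block matrices P(B) = [[B, 0],[0, t(B)]] and Q(B) = [[0, ζ√θ′·t(B)],[√θ′·B, 0]]. If B₁ and B₂ are mutually orthogonal n×n complex matrices (B₁B₂† + B₂B₁† = 0), then P(B₁) and P(B₂) are mutually orthogonal, and Q(B₁) and Q(B₂) are mutually orthogonal. -/
open Matrix

/-- Proposition 7(ii) (orthogonality preservation in the iterated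
construction): if `B₁, B₂` are mutually orthogonal and `t` is a ring
endomorphism of `ℂ` commuting with conjugation, then the iterated weight
matrices `P(B) = [[B, 0], [0, t(B)]]` and
`Q(B) = [[0, ζ√θ′ t(B)], [√θ′ B, 0]]` are again mutually orthogonal. -/
theorem iterated_weight_matrices_mutually_orthogonal
    (t : ℂ →+* ℂ)
    (ht : ∀ z : ℂ, t (starRingEnd ℂ z) = starRingEnd ℂ (t z))
    (θ' : ℝ) (hθ' : 0 < θ') (ζ : ℂ)
    {n : ℕ} (B₁ B₂ : Matrix (Fin n) (Fin n) ℂ)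
    (h : B₁ * B₂ᴴ + B₂ * B₁ᴴ = 0)
    (P Q : Matrix (Fin n) (Fin n) ℂ → Matrix (Fin n ⊕ Fin n) (Fin n ⊕ Fin n) ℂ)
    (hP : ∀ B, P B = Matrix.fromBlocks B 0 0 (B.map t))
    (hQ : ∀ B, Q B = Matrix.fromBlocks 0
        ((ζ * (Real.sqrt θ' : ℂ)) • (B.map t)) (((Real.sqrt θ' : ℂ)) • B) 0) :
    P B₁ * (P B₂)ᴴ + P B₂ * (P B₁)ᴴ = 0
      ∧ Q B₁ * (Q B₂)ᴴ + Q B₂ * (Q B₁)ᴴ = 0 := by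
  have hct : ∀ B : Matrix (Fin n) (Fin n) ℂ, (B.map t)ᴴ = Bᴴ.map t := by
    intro B
    ext i j
    simp [Matrix.conjTranspose_apply, Matrix.map_apply, ht]
  have key : (B₁.map t) * (B₂.map t)ᴴ + (B₂.map t) * (B₁.map t)ᴴ = 0 := by
    rw [hct, hct, ← Matrix.map_mul, ← Matrix.map_mul]
    have : (B₁ * B₂ᴴ).map t + (B₂ * B₁ᴴ).map t = (B₁ * B₂ᴴ + B₂ * B₁ᴴ).map t := by
      ext i j; simp [Matrix.map_apply, Matrix.add_apply, Matrix.mul_apply, map_sum, _root_.map_mul]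
    rw [this, h]
    ext i j; simp [Matrix.map_apply]
  constructor
  · simp only [hP, Matrix.fromBlocks_conjTranspose, Matrix.fromBlocks_multiply,
      Matrix.fromBlocks_add]
    simp [h, key]
  · simp only [hQ, Matrix.fromBlocks_conjTranspose, Matrix.fromBlocks_multiply,
      Matrix.fromBlocks_add, Matrix.conjTranspose_smul, Matrix.smul_mul,
      Matrix.mul_smul, smul_smul, Matrix.zero_mul, Matrix.mul_zero,
      Matrix.conjTranspose_zero, smul_zero, add_zero, zero_add]
    rw [← smul_add, ← smul_add, key, h]
    simp
end
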